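/- With P the lower unitriangular matrix with entries P_{ij} = e_{i-j}(e^{-a_1},…,e^{-a_{i-1}}), the inverse satisfies (P^{-1})_{ij} = (-1)^{i-j} h_{i-j}(e^{-a_1},…,e^{-a_j}), where h_m denotes the complete homogeneous symmetric polynomial of degree m. -/

import Mathlib

/-
Generating functions in an auxiliary variable `t`: `e_k(x_1, …, x_N)` is the coefficient of
`t^k` in `∏_{i ≤ N} (1 + x_i t)`, and `(-1)^r h_r(x_1, …, x_j)` that of `t^r` in
`∏_{i ≤ j} (1 + x_i t)⁻¹`. Let `Q` be the claimed inverse. For `q < p`, the entry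
`(P Q)_{pq}` is the coefficient of `t^(p-q)` in the product of these series for `N = p` and `j = q + 1`.
That product is `∏_{q+1 < i ≤ p} (1 + x_i t)`, a polynomial of degree `p - q - 1`, so the
entry is `0`. Hence `P Q = 1`.
-/

open Matrix

/-- The elementary symmetric polynomial `e_k(x_1, …, x_m)`. -/
def esym {R : Type*} [CommRing R] (x : ℕ → R) (k m : ℕ) : R :=
  ∑ J ∈ (Finset.Icc 1 m).powersetCard k, ∏ j ∈ J, x j

/-- The complete homogeneous symmetric polynomial `h_m(x_1, …, x_j)`. -/
def hsym {R : Type*} [CommRing R] (x : ℕ → R) (m j : ℕ) : R :=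
  ∑ t ∈ (Finset.Icc 1 j).sym m, (Multiset.map x t.1).prod

open PowerSeries Finset

section
variable {σ R : Type*} [CommRing R] (x : σ → R)

theorem coeff_prod_one_add_C_mul_X (s : Finset σ) (k : ℕ) :
    coeff k (∏ i ∈ s, (1 + C (x i) * X) : R⟦X⟧) =
      ∑ J ∈ s.powersetCard k, ∏ j ∈ J, x j := by
  classical
  simp_rw [prod_one_add, prod_mul_distrib, prod_const, ← map_prod, map_sum, coeff_C_mul_X_pow,
    powersetCard_eq_filter, sum_filter, eq_comm]

theorem mk_neg_pow_mul_one_add_C_mul_X (c : R) :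
    (mk fun n => (-c) ^ n) * (1 + C c * X : R⟦X⟧) = 1 := by
  simpa [rescale_mk, rescale_X] using congrArg (rescale (-c)) (mk_one_mul_one_sub_eq_one R)

theorem prod_mk_pow_eq_mk_sum_sym [DecidableEq σ] (s : Finset σ) :
    ∏ i ∈ s, mk (fun n => x i ^ n) = mk fun r => ∑ t ∈ s.sym r, (t.1.map x).prod := by
  induction s using Finset.induction with
  | empty => ext (_ | r) <;> simp [Sym.eq_nil_of_card_zero, coeff_one]
  | insert a s ha ih =>
    ext n
    -- a multiset of size `n` on `insert a s` is `i` copies of `a` plus one of size `n - i` on `s`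
    rw [prod_insert ha, ih, coeff_mul, coeff_mk, Nat.sum_antidiagonal_eq_sum_range_succ_mk,
      ← Fin.sum_univ_eq_sum_range (fun i => coeff i (mk fun n => x a ^ n) * _),
      ← sum_coe_sort ((insert a s).sym n), ← (symInsertEquiv ha).symm.sum_comp,
      Fintype.sum_sigma]
    refine Fintype.sum_congr _ _ fun i => ?_
    rw [coeff_mk, coeff_mk, mul_sum, ← sum_coe_sort (s.sym _)]
    refine Fintype.sum_congr _ _ fun t => ?_
    simp [Sym.coe_fill, Sym.coe_replicate, mul_comm]

theorem mk_neg_one_pow_mul_sum_sym_mul_prod_one_add_C_mul_X [DecidableEq σ] (s : Finset σ) :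
    (mk fun r => (-1) ^ r * ∑ t ∈ s.sym r, (t.1.map x).prod) *
      ∏ i ∈ s, (1 + C (x i) * X) = 1 := by
  have hneg : (mk fun r => (-1) ^ r * ∑ t ∈ s.sym r, (t.1.map x).prod)
      = mk fun r => ∑ t ∈ s.sym r, (t.1.map (-x)).prod := by
    ext r
    simp only [coeff_mk, mul_sum]
    refine sum_congr rfl fun t _ => ?_
    rw [show -x = Neg.neg ∘ x from rfl, ← Multiset.map_map, Multiset.prod_map_neg,
      Multiset.card_map, t.2]
  rw [hneg, ← prod_mk_pow_eq_mk_sum_sym, ← prod_mul_distrib]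
  exact prod_eq_one fun i _ => mk_neg_pow_mul_one_add_C_mul_X (x i)

theorem sum_fin_ite_le_mul_ite_le {n : ℕ} (p q : Fin n) (a b : ℕ → R) :
    ∑ k : Fin n, (if (k : ℕ) ≤ p then a (p - k) else 0) *
        (if (q : ℕ) ≤ k then b (k - q) else 0) =
      if (q : ℕ) ≤ p then ∑ ij ∈ antidiagonal ((p : ℕ) - q), a ij.1 * b ij.2 else 0 := by
  set f : ℕ → R := fun k =>
    (if k ≤ p then a (p - k) else 0) * (if (q : ℕ) ≤ k then b (k - q) else 0)
  rw [Fin.sum_univ_eq_sum_range f]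
  split_ifs with hqp
  · calc ∑ k ∈ range n, f k = ∑ k ∈ Icc (q : ℕ) p, f k := by
          refine (sum_subset (fun k hk => ?_) fun k _ hk => ?_).symm
          · simp only [mem_Icc, mem_range] at hk ⊢
            omega
          · simp only [mem_Icc] at hk
            simp only [f]
            split_ifs <;> first | omega | simp
      _ = ∑ ij ∈ antidiagonal ((p : ℕ) - q), a ij.1 * b ij.2 := by
          refine sum_nbij' (fun k => (p - k, k - q)) (fun ij => q + ij.2) ?_ ?_ ?_ ?_ ?_
          · intro k hk
            simp only [mem_Icc, HasAntidiagonal.mem_antidiagonal] at hk ⊢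
            omega
          · rintro ⟨i, j⟩ hij
            simp only [HasAntidiagonal.mem_antidiagonal] at hij
            simp only [mem_Icc]
            omega
          · intro k hk
            simp only [mem_Icc] at hk
            simp only
            omega
          · rintro ⟨i, j⟩ hij
            simp only [HasAntidiagonal.mem_antidiagonal] at hij
            simp only [Prod.mk.injEq]
            omega
          · intro k hk
            simp only [mem_Icc] at hk
            simp [f, hk.1, hk.2]
  · refine sum_eq_zero fun k _ => ?_
    simp only [f]
    split_ifs <;> first | omega | simp

end

section
variable {R : Type*} [CommRing R] (x : ℕ → R)

theorem esym_zero (m : ℕ) : esym x 0 m = 1 := by simp [esym]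

theorem hsym_zero (j : ℕ) : hsym x 0 j = 1 := by simp [hsym, Sym.eq_nil_of_card_zero]

theorem mk_neg_one_pow_mul_hsym_mul_prod_Icc {j N : ℕ} (hjN : j ≤ N) :
    (mk fun r => (-1) ^ r * hsym x r j) * ∏ i ∈ Icc 1 N, (1 + C (x i) * X)
      = ∏ i ∈ Ioc j N, (1 + C (x i) * X) := by
  have hIcc : ∀ m : ℕ, Icc 1 m = Ioc 0 m := fun m => Icc_add_one_left_eq_Ioc 0 m
  rw [hIcc, ← prod_Ioc_consecutive _ (Nat.zero_le j) hjN, ← mul_assoc, ← hIcc]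
  simp only [hsym, mk_neg_one_pow_mul_sum_sym_mul_prod_one_add_C_mul_X, one_mul]

theorem sum_antidiagonal_esym_mul_hsym_eq_zero {j N m : ℕ} (hjN : j ≤ N) (hm : N < j + m) :
    ∑ ij ∈ antidiagonal m, esym x ij.1 N * ((-1) ^ ij.2 * hsym x ij.2 j) = 0 := by
  have h := congrArg (coeff m) (mk_neg_one_pow_mul_hsym_mul_prod_Icc x hjN)
  rw [mul_comm, coeff_mul, coeff_prod_one_add_C_mul_X,
    powersetCard_eq_empty.2 (by rw [Nat.card_Ioc]; omega), sum_empty] at h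
  simpa [esym, coeff_prod_one_add_C_mul_X] using h

end

/-- If `P` is the lower unitriangular matrix with entries
`P_{ij} = e_{i-j}(x_1,…,x_{i-1})`, then `(P⁻¹)_{ij} = (-1)^{i-j} h_{i-j}(x_1,…,x_j)`. -/
theorem stmt6 {R : Type*} [CommRing R] (n : ℕ) (x : ℕ → R)
    (P : Matrix (Fin n) (Fin n) R)
    (hP : ∀ p q : Fin n, P p q =
      if (q : ℕ) ≤ (p : ℕ) then esym x ((p : ℕ) - (q : ℕ)) (p : ℕ) else 0) :
    ∀ p q : Fin n, (q : ℕ) ≤ (p : ℕ) →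
      P⁻¹ p q = (-1 : R) ^ ((p : ℕ) - (q : ℕ)) *
        hsym x ((p : ℕ) - (q : ℕ)) ((q : ℕ) + 1) := by
  set Q : Matrix (Fin n) (Fin n) R := Matrix.of fun p q =>
    if (q : ℕ) ≤ p then (-1) ^ ((p : ℕ) - q) * hsym x ((p : ℕ) - q) ((q : ℕ) + 1) else 0
    with hQ
  have hPQ : P * Q = 1 := by
    ext p q
    simp only [mul_apply, hP, hQ, of_apply, sum_fin_ite_le_mul_ite_le p q (fun d => esym x d p)
      (fun d => (-1) ^ d * hsym x d ((q : ℕ) + 1))]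
    rcases lt_trichotomy (q : ℕ) p with hqp | hqp | hpq
    · rw [if_pos hqp.le, sum_antidiagonal_esym_mul_hsym_eq_zero x hqp (by omega),
        one_apply_ne (Fin.ne_of_gt hqp)]
    · obtain rfl := Fin.ext hqp
      simp [esym_zero, hsym_zero]
    · rw [if_neg (not_le.2 hpq), one_apply_ne (Fin.ne_of_lt hpq)]
  intro p q hqp
  rw [inv_eq_right_inv hPQ, hQ, of_apply, if_pos hqp]
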